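/- Let 1/2 < δ < 1, set ρ := 2 - 1/δ, and let 1/2 < α < 1 and c < 0. Let k, N : ℕ → ℕ satisfy k(d) < d < N(d), d/N(d) → δ, k(d)/d → ρ, and N(d) - 2d + k(d) ≤ c·d^α for all sufficiently large d. Then Q_{d,k(d)}(N(d)) → 1 as d → ∞. -/

import Mathlib

open Filter Finset Real Topology

/-- `Q d k N = 2^k · (Σ_{i=0}^{d-k-1} C(N-k-1, i)) / (Σ_{i=0}^{d-1} C(N-1, i))`,
the normalized expected `k`-face number `E f_k(C_N)/C(N,k)` of the Cover–Efron cone. -/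
noncomputable def Q (d k N : ℕ) : ℝ :=
  2 ^ k * (∑ i ∈ Finset.range (d - k), ((N - k - 1).choose i : ℝ)) /
    (∑ i ∈ Finset.range d, ((N - 1).choose i : ℝ))


set_option maxHeartbeats 2000000

private 
lemma sum_choose_split (M d : ℕ) (hd : d ≤ M + 1) :
    (∑ i ∈ Finset.range d, (M.choose i : ℝ))
      = 2 ^ M - ∑ j ∈ Finset.range (M + 1 - d), (M.choose j : ℝ) := by
  have hnat : (∑ i ∈ Finset.range d, M.choose i)
      + (∑ j ∈ Finset.range (M + 1 - d), M.choose j) = 2 ^ M := by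
    have hIco : ∑ i ∈ Finset.Ico d (M + 1), M.choose i
        = ∑ j ∈ Finset.range (M + 1 - d), M.choose j := by
      rw [Finset.sum_Ico_eq_sum_range,
        ← Finset.sum_range_reflect (fun j => M.choose j) (M + 1 - d)]
      apply Finset.sum_congr rfl
      intro j hj
      have hj' := Finset.mem_range.mp hj
      rw [show M + 1 - d - 1 - j = M - (d + j) by omega,
        Nat.choose_symm (by omega)]
    rw [← hIco, Finset.sum_range_add_sum_Ico _ hd, Nat.sum_range_choose]
  have h := congrArg (fun x : ℕ => (x : ℝ)) hnat
  push_cast at h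
  linarith

private 
lemma chernoff (n s : ℕ) (t : ℝ) (ht : 0 < t) (hs : (s : ℝ) + t ≤ n / 2) :
    (∑ j ∈ Finset.range (s + 1), (n.choose j : ℝ))
      ≤ 2 ^ n * Real.exp (-(t ^ 2 / (2 * n))) := by
  have hs0 : (0 : ℝ) ≤ (s : ℝ) := Nat.cast_nonneg s
  have hn0 : (0 : ℝ) < n := by linarith
  have htn : t ≤ (n : ℝ) / 2 := by linarith
  set ε : ℝ := t / n with hεdef
  have hε0 : 0 < ε := div_pos ht hn0
  have hεhalf : ε ≤ 1 / 2 := by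
    rw [hεdef, div_le_div_iff₀ hn0 (by norm_num)]; linarith
  set x : ℝ := 1 - ε with hxdef
  have hx0 : 0 < x := by rw [hxdef]; linarith
  have hx1 : x ≤ 1 := by rw [hxdef]; linarith
  have hsn : s + 1 ≤ n + 1 := by
    have : (s : ℝ) ≤ (n : ℝ) := by linarith
    exact_mod_cast Nat.add_le_add_right (Nat.cast_le.mp this) 1
  -- Step A
  have stepA : (∑ j ∈ Finset.range (s + 1), (n.choose j : ℝ)) * x ^ s
      ≤ (1 + x) ^ n := by
    calc (∑ j ∈ Finset.range (s + 1), (n.choose j : ℝ)) * x ^ s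
        = ∑ j ∈ Finset.range (s + 1), (n.choose j : ℝ) * x ^ s := by
          rw [Finset.sum_mul]
      _ ≤ ∑ j ∈ Finset.range (s + 1), (n.choose j : ℝ) * x ^ j := by
          apply Finset.sum_le_sum
          intro j hj
          exact mul_le_mul_of_nonneg_left
            (pow_le_pow_of_le_one hx0.le hx1 (Nat.lt_succ_iff.mp (Finset.mem_range.mp hj)))
            (Nat.cast_nonneg _)
      _ ≤ ∑ j ∈ Finset.range (n + 1), (n.choose j : ℝ) * x ^ j := by
          apply Finset.sum_le_sum_of_subset_of_nonneg
            (Finset.range_subset_range.mpr hsn)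
          intro j _ _
          positivity
      _ = (1 + x) ^ n := by
          rw [add_comm 1 x, add_pow]
          apply Finset.sum_congr rfl
          intro j hj
          simp [mul_comm]
  -- Step B
  have stepB : (1 + x) ^ n ≤ 2 ^ n * Real.exp (-((n : ℝ) * ε / 2)) := by
    have h1 : 1 + x = 2 * (1 - ε / 2) := by rw [hxdef]; ring
    have h2 : (1 : ℝ) - ε / 2 ≤ Real.exp (-(ε / 2)) := by
      have := Real.add_one_le_exp (-(ε / 2)); linarith
    calc (1 + x) ^ n = 2 ^ n * (1 - ε / 2) ^ n := by rw [h1, mul_pow]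
      _ ≤ 2 ^ n * Real.exp (-(ε / 2)) ^ n := by
          gcongr
          · linarith
      _ = 2 ^ n * Real.exp (-((n : ℝ) * ε / 2)) := by
          rw [← Real.exp_nat_mul]; ring_nf
  -- Step C
  have stepC : Real.exp (-((s : ℝ) * (ε / (1 - ε)))) ≤ x ^ s := by
    have hx0' : (0 : ℝ) < 1 - ε := hx0
    have hy : Real.exp (-(ε / (1 - ε))) ≤ x := by
      have h1 : ε / (1 - ε) + 1 ≤ Real.exp (ε / (1 - ε)) :=
        Real.add_one_le_exp _
      have h2 : ε / (1 - ε) + 1 = 1 / (1 - ε) := by field_simp; ring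
      have h3 : 1 / (1 - ε) ≤ Real.exp (ε / (1 - ε)) := by rw [← h2]; exact h1
      rw [Real.exp_neg, hxdef]
      rw [inv_le_comm₀ (Real.exp_pos _) hx0']
      rw [← one_div]
      exact h3
    calc Real.exp (-((s : ℝ) * (ε / (1 - ε))))
        = Real.exp (-(ε / (1 - ε))) ^ s := by
          rw [← Real.exp_nat_mul]; ring_nf
      _ ≤ x ^ s := pow_le_pow_left₀ (Real.exp_pos _).le hy s
  -- combine
  have hxs : 0 < x ^ s := pow_pos hx0 s
  have step1 : (∑ j ∈ Finset.range (s + 1), (n.choose j : ℝ))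
      ≤ (1 + x) ^ n / x ^ s := (le_div_iff₀ hxs).mpr stepA
  have step2 : (1 + x) ^ n / x ^ s
      ≤ (2 ^ n * Real.exp (-((n : ℝ) * ε / 2))) / Real.exp (-((s : ℝ) * (ε / (1 - ε)))) :=
    div_le_div₀ (by positivity) stepB (Real.exp_pos _) stepC
  have step3 : (2 ^ n * Real.exp (-((n : ℝ) * ε / 2))) / Real.exp (-((s : ℝ) * (ε / (1 - ε))))
      = 2 ^ n * Real.exp (-((n : ℝ) * ε / 2) - (-((s : ℝ) * (ε / (1 - ε))))) := by
    rw [Real.exp_sub]; ring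
  -- arithmetic
  have hnt : 0 < (n : ℝ) - t := by linarith
  have hne : (n : ℝ) * ε = t := by rw [hεdef]; field_simp
  have hfrac : ε / (1 - ε) = t / ((n : ℝ) - t) := by
    rw [hεdef]
    rw [show (1 : ℝ) - t / n = ((n : ℝ) - t) / n by field_simp]
    field_simp
  have key : (s : ℝ) * t / ((n : ℝ) - t) ≤ t / 2 - t ^ 2 / (2 * n) := by
    rw [show t / 2 - t ^ 2 / (2 * n) = t * ((n : ℝ) - t) / (2 * n) by field_simp]
    rw [div_le_div_iff₀ hnt (by positivity)]
    have hint : (2 * (s : ℝ) * (n : ℝ)) * t ≤ (((n : ℝ) - 2 * t) * (n : ℝ)) * t :=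
      mul_le_mul_of_nonneg_right
        (mul_le_mul_of_nonneg_right (by linarith) hn0.le) ht.le
    nlinarith [hint, pow_nonneg ht.le 3]
  have step4 : -((n : ℝ) * ε / 2) - (-((s : ℝ) * (ε / (1 - ε)))) ≤ -(t ^ 2 / (2 * n)) := by
    rw [hne, hfrac]
    have : (s : ℝ) * (t / ((n : ℝ) - t)) = (s : ℝ) * t / ((n : ℝ) - t) := by ring
    rw [this]
    linarith
  calc (∑ j ∈ Finset.range (s + 1), (n.choose j : ℝ))
      ≤ (1 + x) ^ n / x ^ s := step1
    _ ≤ _ := step2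
    _ = _ := step3
    _ ≤ 2 ^ n * Real.exp (-(t ^ 2 / (2 * n))) :=
        mul_le_mul_of_nonneg_left (Real.exp_le_exp.mpr step4) (by positivity)

private 
lemma ratio_bounds (P a b e : ℝ) (hP : 0 < P) (ha0 : 0 ≤ a) (hb0 : 0 ≤ b)
    (ha : a ≤ e * P) (hb : b ≤ e * P) (he0 : 0 ≤ e) (he : e < 1) :
    1 - e ≤ (P - a) / (P - b) ∧ (P - a) / (P - b) ≤ (1 - e)⁻¹ := by
  have hden : 0 < P - b := by nlinarith
  constructor
  · rw [le_div_iff₀ hden]; nlinarith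
  · rw [div_le_iff₀ hden, inv_mul_eq_div, le_div_iff₀ (by linarith : (0:ℝ) < 1 - e)]
    nlinarith

theorem Q_tendsto_one_subcritical (δ ρ c α : ℝ) (hδ : 1 / 2 < δ) (hδ1 : δ < 1)
    (hρ : ρ = 2 - 1 / δ) (hα1 : 1 / 2 < α) (hα2 : α < 1) (hc : c < 0)
    (k N : ℕ → ℕ) (hkN : ∀ᶠ d in atTop, k d < d ∧ d < N d)
    (h1 : Tendsto (fun d : ℕ => (d : ℝ) / (N d : ℝ)) atTop (𝓝 δ))
    (h2 : Tendsto (fun d : ℕ => (k d : ℝ) / (d : ℝ)) atTop (𝓝 ρ))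
    (h3 : ∀ᶠ d : ℕ in atTop, (N d : ℝ) - 2 * d + k d ≤ c * (d : ℝ) ^ α) :
    Tendsto (fun d : ℕ => Q d (k d) (N d)) atTop (𝓝 1) := by
  set tt : ℕ → ℝ := fun d => -c * (d : ℝ) ^ α / 2 with htt
  set E : ℕ → ℝ := fun d => Real.exp (-((tt d) ^ 2 / (2 * (N d : ℝ)))) with hE
  -- the exponent tends to atTop
  have hδ0 : 0 < δ := by linarith
  have hT : Tendsto (fun d : ℕ => (tt d) ^ 2 / (2 * (N d : ℝ))) atTop atTop := by
    have hg1 : Tendsto (fun d : ℕ => (d : ℝ) ^ (2 * α - 1)) atTop atTop :=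
      (tendsto_rpow_atTop (by linarith)).comp tendsto_natCast_atTop_atTop
    have hc2 : (0 : ℝ) < c ^ 2 / 8 := by
      have hc' : c ≠ 0 := ne_of_lt hc
      positivity
    have hg2 : Tendsto (fun d : ℕ => c ^ 2 / 8 * (d : ℝ) ^ (2 * α - 1)) atTop atTop :=
      (tendsto_const_mul_atTop_of_pos hc2).mpr hg1
    have hg3 : Tendsto (fun d : ℕ => c ^ 2 / 8 * (d : ℝ) ^ (2 * α - 1) * ((d : ℝ) / (N d : ℝ)))
        atTop atTop := Tendsto.atTop_mul_pos hδ0 hg2 h1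
    apply hg3.congr'
    filter_upwards [eventually_gt_atTop 0, hkN] with d hd hkd
    have hd0 : (0 : ℝ) < (d : ℝ) := by exact_mod_cast hd
    have hN0 : (0 : ℝ) < (N d : ℝ) := by
      have : 0 < N d := by omega
      exact_mod_cast this
    have hpow : ((d : ℝ) ^ α) ^ 2 = (d : ℝ) ^ (2 * α - 1) * (d : ℝ) := by
      rw [← Real.rpow_natCast ((d : ℝ) ^ α) 2, ← Real.rpow_mul hd0.le,
        ← Real.rpow_add_one hd0.ne']
      congr 1
      push_cast
      ring
    have h1' : tt d = -c * (d : ℝ) ^ α / 2 := rfl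
    calc c ^ 2 / 8 * (d : ℝ) ^ (2 * α - 1) * ((d : ℝ) / (N d : ℝ))
        = c ^ 2 * ((d : ℝ) ^ (2 * α - 1) * (d : ℝ)) / (8 * (N d : ℝ)) := by ring
      _ = c ^ 2 * ((d : ℝ) ^ α) ^ 2 / (8 * (N d : ℝ)) := by rw [hpow]
      _ = tt d ^ 2 / (2 * (N d : ℝ)) := by rw [h1']; ring
  have hEt : Tendsto E atTop (𝓝 0) :=
    Real.tendsto_exp_atBot.comp (tendsto_neg_atTop_atBot.comp hT)
  have hE0 : ∀ d, 0 ≤ E d := fun d => (Real.exp_pos _).le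
  -- eventual bounds
  have hbound : ∀ᶠ d in atTop,
      1 - E d ≤ Q d (k d) (N d) ∧ Q d (k d) (N d) ≤ (1 - E d)⁻¹ := by
    filter_upwards [hkN, h3, eventually_gt_atTop 0,
      hEt.eventually (eventually_lt_nhds (by norm_num : (0:ℝ) < 1))] with d hkd h3d hd1 hEd
    obtain ⟨hKd, hdn⟩ := hkd
    set n := N d with hn
    set K := k d with hK
    have hd0 : (0 : ℝ) < (d : ℝ) := by exact_mod_cast hd1
    have ht0 : 0 < tt d := by
      rw [htt]
      have : (0:ℝ) < (d : ℝ) ^ α := Real.rpow_pos_of_pos hd0 α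
      simp only
      nlinarith
    have hcd : c * (d : ℝ) ^ α = -2 * tt d := by rw [htt]; ring
    have hK0 : (0 : ℝ) ≤ (K : ℝ) := Nat.cast_nonneg K
    -- denominator split
    have hsplitB := sum_choose_split (n - 1) d (by omega)
    have hidxB : n - 1 + 1 - d = (n - d - 1) + 1 := by omega
    rw [hidxB] at hsplitB
    -- numerator split
    have hsplitA := sum_choose_split (n - K - 1) (d - K) (by omega)
    have hidxA : n - K - 1 + 1 - (d - K) = (n - d - 1) + 1 := by omega
    rw [hidxA] at hsplitA
    -- casts
    have hcast1 : ((n - 1 : ℕ) : ℝ) = (n : ℝ) - 1 := by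
      rw [Nat.cast_sub (by omega)]
      push_cast; ring
    have hcast2 : ((n - K - 1 : ℕ) : ℝ) = (n : ℝ) - K - 1 := by
      rw [Nat.cast_sub (by omega), Nat.cast_sub (by omega)]
      push_cast; ring
    have hcast3 : ((n - d - 1 : ℕ) : ℝ) = (n : ℝ) - d - 1 := by
      rw [Nat.cast_sub (by omega), Nat.cast_sub (by omega)]
      push_cast; ring
    -- chernoff for denominator tail
    have hB := chernoff (n - 1) (n - d - 1) (tt d) ht0 (by
      rw [hcast1, hcast3]
      have := h3d
      rw [hcd] at this
      linarith)
    have hA := chernoff (n - K - 1) (n - d - 1) (tt d) ht0 (by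
      rw [hcast2, hcast3]
      have := h3d
      rw [hcd] at this
      linarith)
    -- tail bounds relative to E d
    have hMn1 : (1 : ℝ) ≤ ((n - 1 : ℕ) : ℝ) := by
      rw [hcast1]; have : (2:ℕ) ≤ n := by omega
      have := (Nat.cast_le (α := ℝ)).mpr this; push_cast at this ⊢; linarith
    have hMn2 : (1 : ℝ) ≤ ((n - K - 1 : ℕ) : ℝ) := by
      rw [hcast2]
      have : K + 2 ≤ n := by omega
      have := (Nat.cast_le (α := ℝ)).mpr this; push_cast at this ⊢; linarith
    have hmono : ∀ m : ℕ, (1:ℝ) ≤ (m:ℝ) → (m:ℝ) ≤ (n:ℝ) →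
        Real.exp (-((tt d) ^ 2 / (2 * (m : ℝ)))) ≤ E d := by
      intro m hm1 hmn
      rw [hE]
      apply Real.exp_le_exp.mpr
      rw [neg_le_neg_iff]
      apply div_le_div_of_nonneg_left (by positivity) (by linarith) (by linarith)
    have hBn : ((n - 1 : ℕ) : ℝ) ≤ (n : ℝ) := by rw [hcast1]; linarith
    have hAn : ((n - K - 1 : ℕ) : ℝ) ≤ (n : ℝ) := by rw [hcast2]; linarith
    have hTB : (∑ j ∈ Finset.range ((n - d - 1) + 1), ((n - 1).choose j : ℝ))
        ≤ E d * 2 ^ (n - 1) :=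
      le_trans hB (by
        rw [mul_comm]
        exact mul_le_mul_of_nonneg_right (hmono _ hMn1 hBn) (by positivity))
    have hTA : (∑ j ∈ Finset.range ((n - d - 1) + 1), ((n - K - 1).choose j : ℝ))
        ≤ E d * 2 ^ (n - K - 1) :=
      le_trans hA (by
        rw [mul_comm]
        exact mul_le_mul_of_nonneg_right (hmono _ hMn2 hAn) (by positivity))
    -- rewrite Q
    have hQ : Q d K n = ((2:ℝ) ^ (n - 1)
          - 2 ^ K * ∑ j ∈ Finset.range ((n - d - 1) + 1), ((n - K - 1).choose j : ℝ))
        / ((2:ℝ) ^ (n - 1)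
          - ∑ j ∈ Finset.range ((n - d - 1) + 1), ((n - 1).choose j : ℝ)) := by
      rw [Q, hsplitA, hsplitB]
      congr 1
      have hKM : K + (n - K - 1) = n - 1 := by omega
      rw [mul_sub, ← pow_add, hKM]
    rw [hQ]
    have hP : (0:ℝ) < 2 ^ (n - 1) := by positivity
    have hTA0 : (0:ℝ) ≤ 2 ^ K * ∑ j ∈ Finset.range ((n - d - 1) + 1), ((n - K - 1).choose j : ℝ) := by
      positivity
    have hTB0 : (0:ℝ) ≤ ∑ j ∈ Finset.range ((n - d - 1) + 1), ((n - 1).choose j : ℝ) := by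
      positivity
    have hTA' : 2 ^ K * (∑ j ∈ Finset.range ((n - d - 1) + 1), ((n - K - 1).choose j : ℝ))
        ≤ E d * 2 ^ (n - 1) := by
      calc 2 ^ K * (∑ j ∈ Finset.range ((n - d - 1) + 1), ((n - K - 1).choose j : ℝ))
          ≤ 2 ^ K * (E d * 2 ^ (n - K - 1)) :=
            mul_le_mul_of_nonneg_left hTA (by positivity)
        _ = E d * 2 ^ (n - 1) := by
            rw [show n - 1 = K + (n - K - 1) by omega, pow_add]; ring
    have hTB' : (∑ j ∈ Finset.range ((n - d - 1) + 1), ((n - 1).choose j : ℝ))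
        ≤ E d * 2 ^ (n - 1) := hTB
    exact ratio_bounds _ _ _ _ hP hTA0 hTB0 hTA' hTB' (hE0 d) hEd
  -- squeeze
  have hlow : Tendsto (fun d => 1 - E d) atTop (𝓝 1) := by
    have h := (tendsto_const_nhds : Tendsto (fun _ : ℕ => (1:ℝ)) atTop (𝓝 1)).sub hEt
    simpa using h
  have hhigh : Tendsto (fun d => (1 - E d)⁻¹) atTop (𝓝 1) := by
    have := hlow.inv₀ (by norm_num)
    simpa using this
  exact tendsto_of_tendsto_of_tendsto_of_le_of_le' hlow hhigh
    (hbound.mono fun d h => h.1) (hbound.mono fun d h => h.2)
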